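/- Let H, K be complex inner product spaces with dim H ≥ 2 and A : H → K a nonzero additive map with dense image preserving orthogonality. Then there exists γ₁ > 0 such that either ⟨A x|A y⟩ = γ₁ ⟨x|y⟩ for all x, y ∈ H, or ⟨A x|A y⟩ = γ₁ ⟨y|x⟩ for all x, y ∈ H. -/

import Mathlib

/-!
For orthonormal `u, w`, orthogonality preservation applied to `l u + m w ⊥ t m̄ u - t l̄ w` shows
that `⟪A (l u), A (t u)⟫` only depends on `t l̄`, through a function that is the same for all unit
vectors; splitting `y` along `x` then gives `⟪A x, A y⟫ = φ ⟪x, y⟫` with `φ = lineProfile A e`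
additive. Since `φ (‖x‖²) = ‖A x‖² ≥ 0`, `φ` is bounded near `0`, hence `ℝ`-linear:
`φ s = α s + β s̄`. If `α` and `β` were both nonzero, a combination of `A e` and `A (i e)` would be
real-orthogonal to the dense range of `A` without vanishing; and `‖A x‖² = (α + β) ‖x‖²`.
-/

open scoped InnerProductSpace ComplexConjugate
open Complex

-- `inner_self_eq_norm_sq_to_K` with the cast as `Complex.ofReal`, the form `push_cast` produces.
theorem inner_self_eq_ofReal_norm_sq {E : Type*} [NormedAddCommGroup E] [InnerProductSpace ℂ E]
    (x : E) : ⟪x, x⟫_ℂ = (‖x‖ : ℂ) ^ 2 :=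
  inner_self_eq_norm_sq_to_K x

theorem exists_inner_eq_zero_norm_eq {𝕜 E : Type*} [RCLike 𝕜] [NormedAddCommGroup E]
    [InnerProductSpace 𝕜 E] (hdim : 2 ≤ Module.rank 𝕜 E) (x : E) :
    ∃ w : E, ⟪x, w⟫_𝕜 = 0 ∧ ‖w‖ = ‖x‖ := by
  have hspan : (𝕜 ∙ x) ≠ ⊤ := by
    intro htop
    have h := rank_span_le (R := 𝕜) ({x} : Set E)
    rw [htop, rank_top, Cardinal.mk_singleton] at h
    exact absurd (hdim.trans h) (by norm_num)
  obtain ⟨v, hv, hv0⟩ :=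
    Submodule.exists_mem_ne_zero_of_ne_bot (mt Submodule.orthogonal_eq_bot_iff.mp hspan)
  refine ⟨((‖x‖ / ‖v‖ : ℝ) : 𝕜) • v, ?_, ?_⟩
  · rw [inner_smul_right, Submodule.mem_orthogonal_singleton_iff_inner_right.mp hv, mul_zero]
  · rw [norm_smul, RCLike.norm_ofReal, abs_div, abs_norm, abs_norm,
      div_mul_cancel₀ _ (norm_ne_zero_iff.mpr hv0)]

theorem AddMonoidHom.exists_eq_mul_add_mul_conj (φ : ℂ →+ ℂ) (hφ : Continuous φ) :
    ∃ α β : ℂ, ∀ s, φ s = α * s + β * conj s := by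
  refine ⟨(φ 1 - I * φ I) / 2, (φ 1 + I * φ I) / 2, fun s ↦ ?_⟩
  have hs : φ s = s.re * φ 1 + s.im * φ I := by
    rw [← real_smul, ← real_smul, ← map_real_smul φ hφ, ← map_real_smul φ hφ, ← map_add,
      real_smul, real_smul, mul_one, re_add_im]
  rw [hs]
  conv_rhs => rw [← re_add_im s, map_add, map_mul, conj_ofReal, conj_ofReal, conj_I]
  linear_combination ((s.im : ℂ) * φ I) * I_sq

section

variable {H K : Type*} [NormedAddCommGroup H] [InnerProductSpace ℂ H]
  [NormedAddCommGroup K] [InnerProductSpace ℂ K]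

def PreservesOrthogonality (A : H → K) : Prop :=
  ∀ x y : H, ⟪x, y⟫_ℂ = 0 → ⟪A x, A y⟫_ℂ = 0

noncomputable def lineProfile (A : H →+ K) (e : H) : ℂ →+ ℂ :=
  AddMonoidHom.mk' (fun s ↦ ⟪A e, A (s • e)⟫_ℂ) fun s t ↦ by
    simp only [add_smul, map_add, inner_add_right]

theorem lineProfile_apply (A : H →+ K) (e : H) (s : ℂ) :
    lineProfile A e s = ⟪A e, A (s • e)⟫_ℂ := rfl

namespace PreservesOrthogonality

variable {A : H →+ K}

theorem inner_map_smul_eq_of_orthogonal (hA : PreservesOrthogonality A) {u w : H}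
    (huw : ⟪u, w⟫_ℂ = 0) (hn : ‖u‖ = ‖w‖) (l m t : ℂ) :
    ⟪A (l • u), A ((t * conj m) • u)⟫_ℂ = ⟪A (m • w), A ((t * conj l) • w)⟫_ℂ := by
  have hwu : ⟪w, u⟫_ℂ = 0 := by rw [← inner_conj_symm, huw, map_zero]
  have hnn : ⟪u, u⟫_ℂ = ⟪w, w⟫_ℂ := by simp only [inner_self_eq_norm_sq_to_K, hn]
  have hperp : ⟪l • u + m • w, (t * conj m) • u - (t * conj l) • w⟫_ℂ = 0 := by
    simp only [inner_add_left, inner_sub_right, inner_smul_left, inner_smul_right, huw, hwu, hnn]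
    ring
  have hcross₁ : ⟪A (l • u), A ((t * conj l) • w)⟫_ℂ = 0 :=
    hA _ _ (by rw [inner_smul_left, inner_smul_right, huw, mul_zero, mul_zero])
  have hcross₂ : ⟪A (m • w), A ((t * conj m) • u)⟫_ℂ = 0 :=
    hA _ _ (by rw [inner_smul_left, inner_smul_right, hwu, mul_zero, mul_zero])
  have h := hA _ _ hperp
  rw [map_add, map_sub, inner_add_left, inner_sub_right, inner_sub_right, hcross₁, hcross₂] at h
  linear_combination h

theorem inner_map_map_smul_eq_of_orthogonal (hA : PreservesOrthogonality A) {u w : H}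
    (huw : ⟪u, w⟫_ℂ = 0) (hn : ‖u‖ = ‖w‖) (s : ℂ) :
    ⟪A u, A (s • u)⟫_ℂ = ⟪A w, A (s • w)⟫_ℂ := by
  simpa using hA.inner_map_smul_eq_of_orthogonal huw hn 1 1 s

theorem inner_map_smul_map_smul (hA : PreservesOrthogonality A) (hdim : 2 ≤ Module.rank ℂ H)
    (x : H) (l t : ℂ) :
    ⟪A (l • x), A (t • x)⟫_ℂ = ⟪A x, A ((t * conj l) • x)⟫_ℂ := by
  obtain ⟨w, hxw, hn⟩ := exists_inner_eq_zero_norm_eq hdim x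
  have h := hA.inner_map_smul_eq_of_orthogonal hxw hn.symm l 1 t
  simp only [map_one, mul_one, one_smul] at h
  rw [h, hA.inner_map_map_smul_eq_of_orthogonal hxw hn.symm]

theorem inner_map_map_smul_add (hA : PreservesOrthogonality A) {x y : H} (hxy : ⟪x, y⟫_ℂ = 0)
    (s : ℂ) :
    ⟪A (x + y), A (s • (x + y))⟫_ℂ = ⟪A x, A (s • x)⟫_ℂ + ⟪A y, A (s • y)⟫_ℂ := by
  have hyx : ⟪y, x⟫_ℂ = 0 := by rw [← inner_conj_symm, hxy, map_zero]
  have hcross₁ : ⟪A x, A (s • y)⟫_ℂ = 0 := hA _ _ (by rw [inner_smul_right, hxy, mul_zero])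
  have hcross₂ : ⟪A y, A (s • x)⟫_ℂ = 0 := hA _ _ (by rw [inner_smul_right, hyx, mul_zero])
  rw [smul_add, map_add, map_add, inner_add_left, inner_add_right, inner_add_right, hcross₁,
    hcross₂, add_zero, zero_add]

theorem inner_map_map_smul_eq_lineProfile_of_orthogonal (hA : PreservesOrthogonality A)
    (hdim : 2 ≤ Module.rank ℂ H) {e z : H} (he : ‖e‖ = 1) (hez : ⟪e, z⟫_ℂ = 0) (s : ℂ) :
    ⟪A z, A (s • z)⟫_ℂ = lineProfile A e (s * ‖z‖ ^ 2) := by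
  have hze : ⟪z, (‖z‖ : ℂ) • e⟫_ℂ = 0 := by
    rw [inner_smul_right, ← inner_conj_symm, hez, map_zero, mul_zero]
  have hn : ‖z‖ = ‖(‖z‖ : ℂ) • e‖ := by
    rw [norm_smul, he, mul_one, Complex.norm_real, norm_norm]
  rw [hA.inner_map_map_smul_eq_of_orthogonal hze hn, smul_smul, hA.inner_map_smul_map_smul hdim,
    Complex.conj_ofReal, lineProfile_apply]
  ring_nf

theorem inner_map_map_smul_eq_lineProfile (hA : PreservesOrthogonality A)
    (hdim : 2 ≤ Module.rank ℂ H) {e : H} (he : ‖e‖ = 1) (x : H) (s : ℂ) :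
    ⟪A x, A (s • x)⟫_ℂ = lineProfile A e (s * ‖x‖ ^ 2) := by
  obtain ⟨α, z, hez, rfl⟩ : ∃ (α : ℂ) (z : H), ⟪e, z⟫_ℂ = 0 ∧ x = α • e + z := by
    refine ⟨⟪e, x⟫_ℂ, x - ⟪e, x⟫_ℂ • e, ?_, by abel⟩
    rw [inner_sub_right, inner_smul_right, inner_self_eq_norm_sq_to_K, he]
    simp
  have hαz : ⟪α • e, z⟫_ℂ = 0 := by rw [inner_smul_left, hez, mul_zero]
  have hnorm : ‖α • e + z‖ ^ 2 = ‖α‖ ^ 2 + ‖z‖ ^ 2 := by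
    rw [sq, sq, sq, norm_add_sq_eq_norm_sq_add_norm_sq_of_inner_eq_zero _ _ hαz, norm_smul, he,
      mul_one]
  calc ⟪A (α • e + z), A (s • (α • e + z))⟫_ℂ
      = ⟪A (α • e), A (s • α • e)⟫_ℂ + ⟪A z, A (s • z)⟫_ℂ := hA.inner_map_map_smul_add hαz s
    _ = lineProfile A e (s * ‖α‖ ^ 2) + lineProfile A e (s * ‖z‖ ^ 2) := by
      rw [smul_smul, hA.inner_map_smul_map_smul hdim, mul_assoc, mul_conj', lineProfile_apply,
        hA.inner_map_map_smul_eq_lineProfile_of_orthogonal hdim he hez]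
    _ = lineProfile A e (s * ‖α • e + z‖ ^ 2) := by
      rw [← map_add, ← mul_add]
      exact_mod_cast congr(lineProfile A e (s * $hnorm.symm))

theorem inner_map_eq_lineProfile (hA : PreservesOrthogonality A) (hdim : 2 ≤ Module.rank ℂ H)
    {e : H} (he : ‖e‖ = 1) (x y : H) :
    ⟪A x, A y⟫_ℂ = lineProfile A e ⟪x, y⟫_ℂ := by
  set c := ⟪x, y⟫_ℂ / (‖x‖ ^ 2 : ℂ)
  have hc : c * ‖x‖ ^ 2 = ⟪x, y⟫_ℂ := by
    rcases eq_or_ne x 0 with rfl | hx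
    · simp
    · exact div_mul_cancel₀ _ (by simpa using hx)
  have hxz : ⟪x, y - c • x⟫_ℂ = 0 := by
    rw [inner_sub_right, inner_smul_right, inner_self_eq_norm_sq_to_K]
    exact sub_eq_zero.mpr hc.symm
  rw [← add_sub_cancel (c • x) y, map_add, inner_add_right, hA _ _ hxz, add_zero,
    hA.inner_map_map_smul_eq_lineProfile hdim he, hc, add_sub_cancel]

end PreservesOrthogonality

section

variable {A : H → K} {φ : ℂ →+ ℂ}

theorem norm_map_smul_le (hG : ∀ x y, ⟪A x, A y⟫_ℂ = φ ⟪x, y⟫_ℂ) (x : H) {s : ℂ}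
    (hs : ‖s‖ ≤ 1) : ‖A (s • x)‖ ≤ ‖A x‖ := by
  set t : ℝ := √(1 - ‖s‖ ^ 2)
  have ht : t ^ 2 = 1 - ‖s‖ ^ 2 := Real.sq_sqrt (by nlinarith [norm_nonneg s])
  have hsplit : ((‖A x‖ ^ 2 : ℝ) : ℂ) = ((‖A (s • x)‖ ^ 2 + ‖A ((t : ℂ) • x)‖ ^ 2 : ℝ) : ℂ) := by
    push_cast
    simp only [← inner_self_eq_ofReal_norm_sq, hG, ← map_add, inner_smul_left, inner_smul_right,
      conj_ofReal, ← mul_assoc, ← add_mul]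
    rw [mul_conj', ← ofReal_mul, ← sq, ← ofReal_pow, ← ofReal_add, ht, add_sub_cancel, ofReal_one,
      one_mul]
  have h : ‖A x‖ ^ 2 = ‖A (s • x)‖ ^ 2 + ‖A ((t : ℂ) • x)‖ ^ 2 := by exact_mod_cast hsplit
  exact (sq_le_sq₀ (norm_nonneg _) (norm_nonneg _)).mp (h ▸ le_add_of_nonneg_right (sq_nonneg _))

theorem continuous_of_inner_map_eq (hG : ∀ x y, ⟪A x, A y⟫_ℂ = φ ⟪x, y⟫_ℂ) {e : H}
    (he : ‖e‖ = 1) : Continuous φ := by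
  refine φ.continuous_of_isBounded_nhds_zero (Metric.closedBall_mem_nhds 0 one_pos)
    (isBounded_iff_forall_norm_le.2 ⟨‖A e‖ * ‖A e‖, ?_⟩)
  rintro _ ⟨s, hs, rfl⟩
  have hφs : φ s = ⟪A e, A (s • e)⟫_ℂ := by
    rw [hG, inner_smul_right, inner_self_eq_ofReal_norm_sq, he]; simp
  calc ‖φ s‖ ≤ ‖A e‖ * ‖A (s • e)‖ := hφs ▸ norm_inner_le_norm _ _
    _ ≤ ‖A e‖ * ‖A e‖ := by
      gcongr
      exact norm_map_smul_le hG e (mem_closedBall_zero_iff.mp hs)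

end

section

variable {A : H → K} {α β : ℂ}

theorem exists_pos_add_eq_of_inner_map_eq
    (hαβ : ∀ x y, ⟪A x, A y⟫_ℂ = α * ⟪x, y⟫_ℂ + β * ⟪y, x⟫_ℂ) (hA : A ≠ 0) :
    ∃ γ : ℝ, 0 < γ ∧ α + β = γ := by
  obtain ⟨x, hx⟩ := Function.ne_iff.mp hA
  rw [Pi.zero_apply] at hx
  have h : ((‖A x‖ ^ 2 : ℝ) : ℂ) = (α + β) * ((‖x‖ ^ 2 : ℝ) : ℂ) := by
    push_cast
    rw [← inner_self_eq_ofReal_norm_sq, ← inner_self_eq_ofReal_norm_sq, hαβ, add_mul]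
  have hx0 : x ≠ 0 := by
    rintro rfl
    simp_all
  refine ⟨‖A x‖ ^ 2 / ‖x‖ ^ 2, by positivity, ?_⟩
  rw [ofReal_div, h, mul_div_cancel_right₀]
  exact_mod_cast (pow_pos (norm_pos_iff.mpr hx0) 2).ne'

theorem eq_zero_or_eq_zero_of_denseRange [Nontrivial H] (hdense : DenseRange A)
    (hαβ : ∀ x y, ⟪A x, A y⟫_ℂ = α * ⟪x, y⟫_ℂ + β * ⟪y, x⟫_ℂ) : α = 0 ∨ β = 0 := by
  by_contra! ⟨hα, hβ⟩
  obtain ⟨e, he⟩ := exists_ne (0 : H)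
  have hP : ∀ x, ⟪A e - I • A (I • e), A x⟫_ℂ = 2 * α * ⟪e, x⟫_ℂ := fun x ↦ by
    simp only [inner_sub_left, inner_smul_left, inner_smul_right, hαβ, conj_I]
    linear_combination (β * ⟪x, e⟫_ℂ - α * ⟪e, x⟫_ℂ) * I_sq
  have hQ : ∀ x, ⟪A e + I • A (I • e), A x⟫_ℂ = 2 * β * ⟪x, e⟫_ℂ := fun x ↦ by
    simp only [inner_add_left, inner_smul_left, inner_smul_right, hαβ, conj_I]
    linear_combination (α * ⟪e, x⟫_ℂ - β * ⟪x, e⟫_ℂ) * I_sq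
  set k := (conj α)⁻¹ • (A e - I • A (I • e)) - (conj β)⁻¹ • (A e + I • A (I • e))
  have hk : ∀ x, ⟪k, A x⟫_ℂ = 2 * (⟪e, x⟫_ℂ - ⟪x, e⟫_ℂ) := fun x ↦ by
    rw [inner_sub_left, inner_smul_left, inner_smul_left, hP, hQ, map_inv₀, map_inv₀, conj_conj,
      conj_conj]
    field_simp
  have hk0 : k = 0 := by
    let _ := InnerProductSpace.rclikeToReal ℂ K
    refine hdense.eq_zero_of_inner_left ℝ fun x ↦ ?_
    rw [real_inner_eq_re_inner, hk, ← inner_conj_symm x e, Complex.sub_conj]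
    simp
  have := hk (I • e)
  rw [hk0, inner_zero_left, inner_smul_right, inner_smul_left, conj_I] at this
  exact he (inner_self_eq_zero.mp (by linear_combination (I / 4) * this + ⟪e, e⟫_ℂ * I_sq))

end

end

theorem stmt_7 {H K : Type*} [NormedAddCommGroup H] [InnerProductSpace ℂ H]
    [NormedAddCommGroup K] [InnerProductSpace ℂ K]
    (hdim : 2 ≤ Module.rank ℂ H)
    (A : H → K) (hA : A ≠ 0)
    (hadd : ∀ x y, A (x + y) = A x + A y)
    (hdense : DenseRange A)
    (horth : ∀ x y : H, (inner ℂ x y : ℂ) = 0 → (inner ℂ (A x) (A y) : ℂ) = 0) :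
    ∃ γ₁ : ℝ, 0 < γ₁ ∧
      ((∀ x y : H, (inner ℂ (A x) (A y) : ℂ) = (γ₁ : ℂ) * (inner ℂ x y : ℂ)) ∨
        (∀ x y : H, (inner ℂ (A x) (A y) : ℂ) = (γ₁ : ℂ) * (inner ℂ y x : ℂ))) := by
  let A' : H →+ K := AddMonoidHom.mk' A hadd
  have : Nontrivial H := rank_pos_iff_nontrivial.mp (two_pos.trans_le hdim)
  obtain ⟨e, he⟩ := exists_norm_eq H zero_le_one
  have hG : ∀ x y, ⟪A' x, A' y⟫_ℂ = lineProfile A' e ⟪x, y⟫_ℂ :=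
    PreservesOrthogonality.inner_map_eq_lineProfile (A := A') horth hdim he
  obtain ⟨α, β, hφ⟩ :=
    (lineProfile A' e).exists_eq_mul_add_mul_conj (continuous_of_inner_map_eq hG he)
  have hαβ : ∀ x y, ⟪A x, A y⟫_ℂ = α * ⟪x, y⟫_ℂ + β * ⟪y, x⟫_ℂ := fun x y ↦ by
    rw [← inner_conj_symm y x]
    exact (hG x y).trans (hφ _)
  obtain ⟨γ, hγ, hsum⟩ := exists_pos_add_eq_of_inner_map_eq hαβ hA
  refine ⟨γ, hγ, ?_⟩
  rcases eq_zero_or_eq_zero_of_denseRange hdense hαβ with rfl | rfl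
  · right
    intro x y
    rw [hαβ, ← hsum]
    ring
  · left
    intro x y
    rw [hαβ, ← hsum]
    ring
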